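/- Let ⟨f_α : α < ω₁⟩ be a bowtie of functions with domains D_α, and let F be the associated map on subsets of ℕ. Suppose C ⊆ ℕ and δ₀ < ω₁ satisfy δ_C ≤ δ₀ and C ⊆* D_{δ₀}. Then for every X ⊆ C one has δ_X ≤ δ₀ and F(X) =* f_{δ₀}[X ∩ D_{δ₀}]; consequently the restriction of the induced automorphism to P(C)/Fin is the trivial isomorphism induced by the almost bijection f_{δ₀}↾C. -/
import Mathlib


open Set

/-- The first uncountable ordinal `ω₁`. -/
noncomputable def omega1 : Ordinal := (Cardinal.aleph 1).ord

/-- `A =* B` : the symmetric difference `(A \ B) ∪ (B \ A)` is finite. -/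
def EqStar (A B : Set ℕ) : Prop := ((A \ B) ∪ (B \ A)).Finite

/-- `A ⊆* B` : `A \ B` is finite. -/
def SubStar (A B : Set ℕ) : Prop := (A \ B).Finite

/-- A bowtie of functions: a sequence `⟨f_α : α < ω₁⟩` where each `f_α` is a
fixed-point-free permutation of a set `D_α ⊆ ℕ`, satisfying conditions
(i), (ii), (iii) of the definition.  (The functions are represented as total
functions on `ℕ`; only their behavior on `D_α` matters.) -/
structure BowtieFn where
  /-- the domains `D_α` -/
  D : Ordinal → Set ℕ
  /-- the functions `f_α` (total functions; only values on `D α` matter) -/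
  f : Ordinal → ℕ → ℕ
  /-- each `f_α` is a permutation of `D_α` -/
  bijOn : ∀ α < omega1, Set.BijOn (f α) (D α) (D α)
  /-- each `f_α` is fixed-point-free on `D_α` -/
  fixedPointFree : ∀ α < omega1, ∀ x ∈ D α, f α x ≠ x
  /-- (i) `D_α ⊆* D_β` for `α < β < ω₁` -/
  sub : ∀ α β, α < β → β < omega1 → SubStar (D α) (D β)
  /-- (i) `D_β \ D_α` is infinite for `α < β < ω₁` -/
  diff_infinite : ∀ α β, α < β → β < omega1 → (D β \ D α).Infinite
  /-- (ii) `f_α =* f_β ↾ D_α` for `α ≤ β < ω₁` -/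
  coherent : ∀ α β, α ≤ β → β < omega1 → {x ∈ D α | f α x ≠ f β x}.Finite
  /-- (iii) every `A ⊆ ℕ` has a witness `δ_A < ω₁` -/
  guess : ∀ A : Set ℕ, ∃ δ, δ < omega1 ∧ ∀ α, δ ≤ α → α < omega1 →
      EqStar (f α '' ((D α \ D δ) ∩ A)) ((D α \ D δ) ∩ A) ∧
      EqStar (f α '' ((D α \ D δ) \ A)) ((D α \ D δ) \ A)

/-- `δ` witnesses condition (iii) of the bowtie definition for the set `A`. -/
def BowtieFn.IsWitness (B : BowtieFn) (A : Set ℕ) (δ : Ordinal) : Prop :=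
  δ < omega1 ∧ ∀ α, δ ≤ α → α < omega1 →
    EqStar (B.f α '' ((B.D α \ B.D δ) ∩ A)) ((B.D α \ B.D δ) ∩ A) ∧
    EqStar (B.f α '' ((B.D α \ B.D δ) \ A)) ((B.D α \ B.D δ) \ A)

/-- `δ_A` : the least ordinal witnessing condition (iii) for `A`. -/
noncomputable def BowtieFn.delta (B : BowtieFn) (A : Set ℕ) : Ordinal :=
  sInf {δ | B.IsWitness A δ}

/-- The map `F` associated to a bowtie of functions:
`F(A) = f_{δ_A}[A ∩ D_{δ_A}] ∪ (A \ D_{δ_A})`. -/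
noncomputable def BowtieFn.F (B : BowtieFn) (A : Set ℕ) : Set ℕ :=
  B.f (B.delta A) '' (A ∩ B.D (B.delta A)) ∪ (A \ B.D (B.delta A))

lemma eqStar_iff {A B : Set ℕ} : EqStar A B ↔ (A \ B).Finite ∧ (B \ A).Finite := by
  unfold EqStar; rw [Set.finite_union]

lemma eqStar_of_finite {A B : Set ℕ} (hA : A.Finite) (hB : B.Finite) : EqStar A B :=
  (hA.union hB).subset (Set.union_subset_union Set.diff_subset Set.diff_subset)

lemma EqStar.symm {A B : Set ℕ} (h : EqStar A B) : EqStar B A := by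
  unfold EqStar at *; rwa [Set.union_comm]

lemma EqStar.trans {A B C : Set ℕ} (h1 : EqStar A B) (h2 : EqStar B C) : EqStar A C := by
  rw [eqStar_iff] at *
  constructor
  · apply (h1.1.union h2.1).subset
    intro x hx; by_cases hb : x ∈ B
    · exact Or.inr ⟨hb, hx.2⟩
    · exact Or.inl ⟨hx.1, hb⟩
  · apply (h2.2.union h1.2).subset
    intro x hx; by_cases hb : x ∈ B
    · exact Or.inr ⟨hb, hx.2⟩
    · exact Or.inl ⟨hx.1, hb⟩

lemma EqStar.union {A A' B B' : Set ℕ} (hA : EqStar A A') (hB : EqStar B B') :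
    EqStar (A ∪ B) (A' ∪ B') := by
  rw [eqStar_iff] at *
  constructor
  · apply (hA.1.union hB.1).subset
    intro x hx; simp only [Set.mem_union, Set.mem_diff] at hx ⊢; tauto
  · apply (hA.2.union hB.2).subset
    intro x hx; simp only [Set.mem_union, Set.mem_diff] at hx ⊢; tauto

lemma EqStar.diff {A A' B B' : Set ℕ} (hA : EqStar A A') (hB : EqStar B B') :
    EqStar (A \ B) (A' \ B') := by
  rw [eqStar_iff] at *
  constructor
  · apply (hA.1.union hB.2).subset
    intro x hx; simp only [Set.mem_union, Set.mem_diff] at hx ⊢; tauto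
  · apply (hA.2.union hB.1).subset
    intro x hx; simp only [Set.mem_union, Set.mem_diff] at hx ⊢; tauto

lemma EqStar.image {A B : Set ℕ} (f : ℕ → ℕ) (h : EqStar A B) : EqStar (f '' A) (f '' B) := by
  rw [eqStar_iff] at *
  constructor
  · apply (h.1.image f).subset
    rintro y ⟨⟨x, hx, rfl⟩, hy⟩
    exact ⟨x, ⟨hx, fun hb => hy ⟨x, hb, rfl⟩⟩, rfl⟩
  · apply (h.2.image f).subset
    rintro y ⟨⟨x, hx, rfl⟩, hy⟩
    exact ⟨x, ⟨hx, fun hb => hy ⟨x, hb, rfl⟩⟩, rfl⟩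

lemma eqStar_image_congr {f g : ℕ → ℕ} {S : Set ℕ} (h : {x ∈ S | f x ≠ g x}.Finite) :
    EqStar (f '' S) (g '' S) := by
  rw [eqStar_iff]
  constructor
  · apply (h.image f).subset
    rintro y ⟨⟨x, hx, rfl⟩, hy⟩
    exact ⟨x, ⟨hx, fun he => hy ⟨x, hx, he.symm⟩⟩, rfl⟩
  · apply (h.image g).subset
    rintro y ⟨⟨x, hx, rfl⟩, hy⟩
    exact ⟨x, ⟨hx, fun he => hy ⟨x, hx, he⟩⟩, rfl⟩

lemma BowtieFn.D_diff_finite (B : BowtieFn) {δ δ' : Ordinal} (h : δ ≤ δ') (h' : δ' < omega1) :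
    (B.D δ \ B.D δ').Finite := by
  rcases h.lt_or_eq with h | rfl
  · exact B.sub _ _ h h'
  · simp

lemma bowtie_witness_step (B : BowtieFn) (S : Set ℕ) {δ δ' α : Ordinal}
    (h1 : δ ≤ δ') (h2 : δ' ≤ α) (h3 : α < omega1)
    (hT : EqStar (B.f α '' ((B.D α \ B.D δ) ∩ S)) ((B.D α \ B.D δ) ∩ S))
    (hW : EqStar (B.f δ' '' ((B.D δ' \ B.D δ) ∩ S)) ((B.D δ' \ B.D δ) ∩ S)) :
    EqStar (B.f α '' ((B.D α \ B.D δ') ∩ S)) ((B.D α \ B.D δ') ∩ S) := by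
  set T : Set ℕ := (B.D α \ B.D δ) ∩ S with hTdef
  set W : Set ℕ := T ∩ B.D δ' with hWdef
  have hδ'ω : δ' < omega1 := lt_of_le_of_lt h2 h3
  have hfin1 : (B.D δ \ B.D δ').Finite := B.D_diff_finite h1 hδ'ω
  have hfin2 : (B.D δ' \ B.D α).Finite := B.D_diff_finite h2 h3
  have hWeq : EqStar W ((B.D δ' \ B.D δ) ∩ S) := by
    rw [eqStar_iff]
    constructor
    · apply Set.finite_empty.subset
      intro x hx
      simp only [hWdef, hTdef, Set.mem_diff, Set.mem_inter_iff, Set.mem_empty_iff_false] at hx ⊢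
      tauto
    · apply hfin2.subset
      intro x hx
      simp only [hWdef, hTdef, Set.mem_diff, Set.mem_inter_iff] at hx ⊢
      tauto
  have hWsub : W ⊆ B.D δ' := Set.inter_subset_right
  have hWimg1 : EqStar (B.f α '' W) (B.f δ' '' W) := by
    apply eqStar_image_congr
    apply (B.coherent δ' α h2 h3).subset
    intro x hx
    exact ⟨hWsub hx.1, fun he => hx.2 he.symm⟩
  have hfW : EqStar (B.f α '' W) W :=
    hWimg1.trans (((hWeq.image (B.f δ')).trans hW).trans hWeq.symm)
  have hTsub : T ⊆ B.D α := fun x hx => hx.1.1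
  have hinj : Set.InjOn (B.f α) T := ((B.bijOn α h3).injOn).mono hTsub
  have himg_diff : B.f α '' (T \ W) = B.f α '' T \ B.f α '' W :=
    hinj.image_diff_subset Set.inter_subset_left
  have hTW : EqStar (B.f α '' (T \ W)) (T \ W) := by
    rw [himg_diff]; exact hT.diff hfW
  have htarget : EqStar ((B.D α \ B.D δ') ∩ S) (T \ W) := by
    rw [eqStar_iff]
    constructor
    · apply hfin1.subset
      intro x hx
      simp only [hWdef, hTdef, Set.mem_diff, Set.mem_inter_iff] at hx ⊢
      tauto
    · apply Set.finite_empty.subset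
      intro x hx
      simp only [hWdef, hTdef, Set.mem_diff, Set.mem_inter_iff, Set.mem_empty_iff_false] at hx ⊢
      tauto
  exact ((htarget.image (B.f α)).trans hTW).trans htarget.symm

lemma BowtieFn.isWitness_mono (B : BowtieFn) {A : Set ℕ} {δ δ' : Ordinal}
    (h : B.IsWitness A δ) (hle : δ ≤ δ') (hδ' : δ' < omega1) : B.IsWitness A δ' := by
  refine ⟨hδ', fun α hα hαω => ?_⟩
  have h1 := h.2 α (hle.trans hα) hαω
  have h2 := h.2 δ' hle hδ'
  have e : ∀ s : Set ℕ, s \ A = s ∩ Aᶜ := fun s => Set.diff_eq s A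
  constructor
  · exact bowtie_witness_step B A hle hα hαω h1.1 h2.1
  · rw [e]
    exact bowtie_witness_step B Aᶜ hle hα hαω (e _ ▸ h1.2) (e _ ▸ h2.2)

lemma BowtieFn.isWitness_delta (B : BowtieFn) (A : Set ℕ) : B.IsWitness A (B.delta A) := by
  obtain ⟨δ, hδ, hw⟩ := B.guess A
  have : Set.Nonempty {δ | B.IsWitness A δ} := ⟨δ, hδ, hw⟩
  exact csInf_mem this

lemma BowtieFn.delta_le (B : BowtieFn) {A : Set ℕ} {δ : Ordinal} (h : B.IsWitness A δ) :
    B.delta A ≤ δ :=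
  csInf_le (OrderBot.bddBelow _) h

/-- if `δ_C ≤ δ₀ < ω₁` and `C ⊆* D_{δ₀}`, then for every `X ⊆ C`
one has `δ_X ≤ δ₀` and `F(X) =* f_{δ₀}[X ∩ D_{δ₀}]`; i.e. the restriction of
the induced automorphism to `P(C)/Fin` is induced by the almost bijection
`f_{δ₀} ↾ C`. -/
theorem bowtie_F_trivial_below (B : BowtieFn) (C : Set ℕ) (δ₀ : Ordinal)
    (hδ₀ : δ₀ < omega1) (hC₁ : B.delta C ≤ δ₀) (hC₂ : SubStar C (B.D δ₀)) :
    ∀ X : Set ℕ, X ⊆ C →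
      B.delta X ≤ δ₀ ∧ EqStar (B.F X) (B.f δ₀ '' (X ∩ B.D δ₀)) := by
  intro X hX
  have hCfin : (C \ B.D δ₀).Finite := hC₂
  have hCwit : B.IsWitness C δ₀ := B.isWitness_mono (B.isWitness_delta C) hC₁ hδ₀
  have hXfin : (X \ B.D δ₀).Finite := hCfin.subset (fun x hx => ⟨hX hx.1, hx.2⟩)
  have hXwit : B.IsWitness X δ₀ := by
    refine ⟨hδ₀, fun α hα hαω => ?_⟩
    constructor
    · have hfin : ((B.D α \ B.D δ₀) ∩ X).Finite :=
        hXfin.subset (fun x hx => ⟨hx.2, hx.1.2⟩)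
      exact eqStar_of_finite (hfin.image _) hfin
    · have he : EqStar ((B.D α \ B.D δ₀) \ X) ((B.D α \ B.D δ₀) \ C) := by
        rw [eqStar_iff]
        constructor
        · apply hCfin.subset
          intro x hx
          simp only [Set.mem_diff] at hx ⊢
          exact ⟨by tauto, hx.1.1.2⟩
        · apply Set.finite_empty.subset
          intro x hx
          simp only [Set.mem_diff, Set.mem_empty_iff_false] at hx ⊢
          exact hx.2 ⟨hx.1.1, fun hxX => hx.1.2 (hX hxX)⟩
      have hw := (hCwit.2 α hα hαω).2
      exact ((he.image (B.f α)).trans hw).trans he.symm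
  have hdle : B.delta X ≤ δ₀ := B.delta_le hXwit
  refine ⟨hdle, ?_⟩
  set δ := B.delta X with hδdef
  have hδwit : B.IsWitness X δ := B.isWitness_delta X
  have hfinδ : (B.D δ \ B.D δ₀).Finite := B.D_diff_finite hdle hδ₀
  have hA2 := (hδwit.2 δ₀ hdle hδ₀).1
  have hA1 : EqStar (X \ B.D δ) ((B.D δ₀ \ B.D δ) ∩ X) := by
    rw [eqStar_iff]
    constructor
    · apply hXfin.subset
      intro x hx
      simp only [Set.mem_diff, Set.mem_inter_iff] at hx ⊢
      tauto
    · apply Set.finite_empty.subset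
      intro x hx
      simp only [Set.mem_diff, Set.mem_inter_iff, Set.mem_empty_iff_false] at hx ⊢
      tauto
  have hsplit : X ∩ B.D δ₀ = (X ∩ B.D δ₀ ∩ B.D δ) ∪ ((X ∩ B.D δ₀) \ B.D δ) :=
    (Set.inter_union_diff _ _).symm
  have hset : (X ∩ B.D δ₀) \ B.D δ = (B.D δ₀ \ B.D δ) ∩ X := by
    ext x
    simp only [Set.mem_diff, Set.mem_inter_iff]
    tauto
  have hB1a : EqStar (X ∩ B.D δ₀ ∩ B.D δ) (X ∩ B.D δ) := by
    rw [eqStar_iff]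
    constructor
    · apply Set.finite_empty.subset
      intro x hx
      simp only [Set.mem_diff, Set.mem_inter_iff, Set.mem_empty_iff_false] at hx ⊢
      tauto
    · apply hfinδ.subset
      intro x hx
      simp only [Set.mem_diff, Set.mem_inter_iff] at hx ⊢
      tauto
  have hB1 : EqStar (B.f δ₀ '' (X ∩ B.D δ₀ ∩ B.D δ)) (B.f δ '' (X ∩ B.D δ)) := by
    refine (hB1a.image _).trans ?_
    exact (eqStar_image_congr ((B.coherent δ δ₀ hdle hδ₀).subset
      (fun x hx => ⟨hx.1.2, hx.2⟩))).symm
  have hB2 : EqStar (B.f δ₀ '' ((X ∩ B.D δ₀) \ B.D δ)) (X \ B.D δ) := by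
    rw [hset]
    exact hA2.trans hA1.symm
  have hmain : EqStar (B.f δ₀ '' (X ∩ B.D δ₀)) (B.F X) := by
    rw [hsplit, Set.image_union, BowtieFn.F, ← hδdef]
    exact hB1.union hB2
  exact hmain.symm
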